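/- Let A be a cocomplete additive category, M ∈ A an object, and B = T_M-Mod the related abelian category. If the class of all projective objects in B is closed under arbitrary (resp. countable) direct limits, then the class of objects Add(M) ⊆ A is closed under arbitrary (resp. countable) direct limits in A. More specifically, if every countable direct limit of copies of the projective generator P = T_M(*) is projective in B, then every countable direct limit of copies of M in A belongs to Add(M). -/

import Mathlib

open CategoryTheory Limits Opposite

universe v u

namespace EnochsPaper

attribute [local instance] Limits.hasSmallestColimitsOfHasColimits

variable {A : Type u} [Category.{v} A]

/-- `l : X ⟶ C` is an `L`-precover of `C`. -/
def IsPrecover (L : A → Prop) {X C : A} (l : X ⟶ C) : Prop :=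
  L X ∧ ∀ (X' : A), L X' → ∀ l' : X' ⟶ C, ∃ f : X' ⟶ X, f ≫ l = l'

/-- `l : X ⟶ C` is an `L`-cover. -/
def IsCover (L : A → Prop) {X C : A} (l : X ⟶ C) : Prop :=
  IsPrecover L l ∧ ∀ e : X ⟶ X, e ≫ l = l → IsIso e

/-- The object `C` admits an `L`-cover. -/
def HasCover (L : A → Prop) (C : A) : Prop :=
  ∃ (X : A) (l : X ⟶ C), IsCover L l

/-- The class `L` is covering: every object has an `L`-cover. -/
def Covering (L : A → Prop) : Prop := ∀ C : A, HasCover L C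

/-- The class `L` is closed under direct limits (colimits of diagrams indexed by
nonempty directed posets). -/
def ClosedUnderDirectLimits (L : A → Prop) : Prop :=
  ∀ (Θ : Type v) (_ : PartialOrder Θ), IsDirected Θ (· ≤ ·) → Nonempty Θ →
    ∀ (D : Θ ⥤ A) (c : Cocone D), IsColimit c → (∀ θ : Θ, L (D.obj θ)) → L c.pt

/-- The class `L` is closed under countable direct limits. -/
def ClosedUnderCountableDirectLimits (L : A → Prop) : Prop :=
  ∀ (Θ : Type v) (_ : PartialOrder Θ), Countable Θ → IsDirected Θ (· ≤ ·) → Nonempty Θ →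
    ∀ (D : Θ ⥤ A) (c : Cocone D), IsColimit c → (∀ θ : Θ, L (D.obj θ)) → L c.pt

variable [HasColimits A]

/-- The copower functor `X ↦ M^{(X)}`, sending a set to the coproduct of that many
copies of `M`. -/
@[simps]
noncomputable def copower (M : A) : Type v ⥤ A where
  obj X := ∐ (fun _ : X => M)
  map {X Y} f := Sigma.desc (fun x => Sigma.ι (fun _ : Y => M) (f x))

/-- The adjunction `M^{(-)} ⊣ Hom_A(M, -)`. -/
noncomputable def copowerAdj (M : A) : copower M ⊣ coyoneda.obj (op M) :=
  Adjunction.mkOfHomEquiv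
    { homEquiv := fun X N =>
        { toFun := fun g => TypeCat.ofHom fun x => Sigma.ι (fun _ : X => M) x ≫ g
          invFun := fun h => Sigma.desc h
          left_inv := fun g => by dsimp only [copower]; ext x; simp
          right_inv := fun h => by ext x; simp }
      homEquiv_naturality_left_symm := by
        intro X X' N f g
        dsimp only [copower]
        ext x
        show Sigma.ι (fun _ : X => M) x ≫ Sigma.desc (fun y => (f ≫ g) y) =
          Sigma.ι (fun _ : X => M) x ≫ Sigma.desc (fun y => Sigma.ι (fun _ : X' => M) (f y)) ≫
            Sigma.desc (fun y => g y)
        simp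
      homEquiv_naturality_right := by
        intro X N N' g f
        ext x
        exact (Category.assoc _ _ _).symm }

/-- The monad `T_M : X ↦ Hom_A(M, M^{(X)})` on the category of sets, induced by the
adjunction `M^{(-)} ⊣ Hom_A(M, -)`. -/
noncomputable def TM (M : A) : Monad (Type v) := (copowerAdj M).toMonad

/-- The category `B = T_M-Mod` of modules (Eilenberg–Moore algebras) over the monad
`T_M`. -/
noncomputable abbrev BCat (M : A) := (TM M).Algebra

/-- The free `T_M`-module on one generator, `P = T_M(*)`; it is a projective generator
of `B = T_M-Mod`. -/
noncomputable def PGen (M : A) : BCat M := (TM M).free.obj PUnit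

/-- The functor `Ψ_M : A ⥤ B`, `N ↦ Hom_A(M, N)` with its natural `T_M`-module structure:
the comparison functor of the adjunction. -/
noncomputable def PsiM (M : A) : A ⥤ BCat M := Monad.comparison (copowerAdj M)

/-- The functor `Φ_M : B ⥤ A`, left adjoint to `Ψ_M`. -/
noncomputable def PhiM (M : A) : BCat M ⥤ A :=
  Monad.MonadicityInternal.leftAdjointComparison (copowerAdj M)

/-- The adjunction `Φ_M ⊣ Ψ_M`. -/
noncomputable def adjM (M : A) : PhiM M ⊣ PsiM M :=
  Monad.MonadicityInternal.comparisonAdjunction (copowerAdj M)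

/-- `Add(M)`: the class of direct summands of coproducts of copies of `M`. -/
def AddClass (M : A) : A → Prop := fun N =>
  ∃ (X : Type v) (s : N ⟶ ∐ (fun _ : X => M)) (r : (∐ fun _ : X => M) ⟶ N), s ≫ r = 𝟙 N

/-- The inductive system `M → M → M → ⋯` determined by a sequence of endomorphisms of
`M`; its direct limit is a "countable direct limit of copies of `M`". -/
noncomputable def seqDiagram {C : Type u_1} [Category.{u_2} C] (M : C) (f : ℕ → (M ⟶ M)) :
    ℕ ⥤ C :=
  Functor.ofSequence (X := fun _ => M) f

variable [Preadditive A]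

/-- The telescope map `id − shift : ∐_{n} M ⟶ ∐_{n} M` associated with a sequence of
endomorphisms `f n : M ⟶ M`; its component on the `n`-th summand is
`ι_n − f_n ≫ ι_{n+1}`. -/
noncomputable def telescopeMap (M : A) (f : ℕ → (M ⟶ M)) :
    (∐ fun _ : ℕ => M) ⟶ (∐ fun _ : ℕ => M) :=
  Sigma.desc fun n =>
    Sigma.ι (fun _ : ℕ => M) n - (f n ≫ Sigma.ι (fun _ : ℕ => M) (n + 1))

/-- The canonical morphism `∐_{n} M ⟶ colim_n M` to (the point of a cocone computing)
the direct limit of the inductive system. -/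
noncomputable def telescopeProj (M : A) (f : ℕ → (M ⟶ M)) (c : Cocone (seqDiagram M f)) :
    (∐ fun _ : ℕ => M) ⟶ c.pt :=
  Sigma.desc fun n => c.ι.app n

/-- The telescope Hom exactness condition (THEC): for every sequence of endomorphisms of
`M`, the right exact telescope sequence `∐ M → ∐ M → colim M → 0` stays right exact after
applying `Hom_A(M, −)`: every morphism `M ⟶ colim M` lifts to `∐ M`, and every morphism
`M ⟶ ∐ M` killed by the projection factors through the telescope map `id − shift`. -/
def THEC (M : A) : Prop :=
  ∀ (f : ℕ → (M ⟶ M)) (c : Cocone (seqDiagram M f)), IsColimit c →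
    (∀ h : M ⟶ c.pt, ∃ g : M ⟶ ∐ fun _ : ℕ => M, g ≫ telescopeProj M f c = h) ∧
    (∀ g : M ⟶ ∐ fun _ : ℕ => M, g ≫ telescopeProj M f c = 0 →
      ∃ e : M ⟶ ∐ fun _ : ℕ => M, e ≫ telescopeMap M f = g)



end EnochsPaper

/-!
Let `D` be a diagram in `Add(M)` with colimit `c`. The colimit `b` of `Ψ_M ∘ D` in `B` is
projective by hypothesis, hence a retract of the free module `Ψ_M(M^{(b)})`. As `Ψ_M` is fully
faithful on `Add(M)`, the section `b ⟶ Ψ_M(M^{(b)})` restricted to the legs of `Ψ_M ∘ D` comes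
from a cocone `D ⟶ M^{(b)}`, and the retraction composed with `b ⟶ Ψ_M(c)` comes from a morphism
`M^{(b)} ⟶ c`; together they exhibit `c` as a direct summand of `M^{(b)}`. For a sequence of
copies of `M` this needs only that direct limits of copies of `Ψ_M(M) ≅ P` are projective.

Two facts about `B` are needed on the way. Eilenberg–Moore categories over `Set` are cocomplete:
the colimit of `K` is a quotient of the free algebra on `Σ j, K j`. And free `T_M`-modules are
projective, because epimorphisms of `T_M`-modules are surjective: the quotient of the target by
the image of an epimorphism is computed with the abelian group structure that `T_M`-modules carry.
-/

universe w w'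

namespace CategoryTheory.Monad

open TypeCat

variable {T : Monad (Type v)}

lemma free_hom_ext {X : Type v} {V : T.Algebra} {f g : T.free.obj X ⟶ V}
    (h : ∀ x, f.f (T.η.app X x) = g.f (T.η.app X x)) : f = g :=
  (T.adj.homEquiv X V).injective (by ext x; exact h x)

namespace Algebra

lemma a_η (b : T.Algebra) (x : b.A) : b.a (T.η.app b.A x) = x :=
  congrArg (fun k => k x) b.unit

lemma a_μ (b : T.Algebra) (S : T.obj (T.obj b.A)) : b.a (T.μ.app b.A S) = b.a (T.map b.a S) :=
  congrArg (fun k => k S) b.assoc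

lemma Hom.map_a {b c : T.Algebra} (h : b ⟶ c) (t : T.obj b.A) :
    h.f (b.a t) = c.a (T.map h.f t) :=
  (congrArg (fun k => k t) h.h).symm

lemma Hom.a_map_mem_range {b c : T.Algebra} (h : b ⟶ c) {X : Type v} (t : T.obj X)
    (g : X → c.A) (hg : ∀ x, g x ∈ Set.range h.f) : c.a (T.map (↾g) t) ∈ Set.range h.f := by
  choose g' hg' using hg
  refine ⟨b.a (T.map (↾g') t), ?_⟩
  rw [h.map_a, ← types_comp_apply (T.map _) (T.map _), ← T.map_comp]
  congr
  ext x
  exact hg' x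

def IsCongruence (b : T.Algebra) (r : Setoid b.A) : Prop :=
  ∀ ⦃X : Type v⦄ (f g : X ⟶ b.A), (∀ x, r (f x) (g x)) →
    ∀ t, r (b.a (T.map f t)) (b.a (T.map g t))

section Quotient

variable {b : T.Algebra} {r : Setoid b.A}

lemma IsCongruence.map_a_mk (hr : b.IsCongruence r) {X : Type v} {f g : X ⟶ b.A}
    (h : f ≫ ↾(_root_.Quotient.mk r) = g ≫ ↾(_root_.Quotient.mk r)) :
    T.map f ≫ b.a ≫ ↾(_root_.Quotient.mk r) = T.map g ≫ b.a ≫ ↾(_root_.Quotient.mk r) := by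
  ext t
  exact _root_.Quotient.sound (hr f g (fun x => _root_.Quotient.exact (types_congr_hom h x)) t)

variable (hr : b.IsCongruence r)

noncomputable abbrev quotient : T.Algebra where
  A := _root_.Quotient r
  a := T.map (↾Quotient.out) ≫ b.a ≫ ↾(_root_.Quotient.mk r)
  unit := by
    rw [← T.η.naturality_assoc, Functor.id_map, b.unit_assoc]
    ext q
    exact Quotient.out_eq q
  assoc := by
    rw [← T.μ.naturality_assoc, b.assoc_assoc, Functor.comp_map, ← Functor.map_comp_assoc,
      ← Functor.map_comp_assoc]
    apply hr.map_a_mk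
    ext S
    exact (Quotient.out_eq _).symm

noncomputable def toQuotient : b ⟶ quotient hr where
  f := ↾(_root_.Quotient.mk r)
  h := by
    ext t
    refine _root_.Quotient.sound ?_
    have h := hr (↾(_root_.Quotient.mk r) ≫ ↾Quotient.out) (𝟙 _) (fun x => Quotient.mk_out x) t
    rwa [Functor.map_comp, Functor.map_id] at h

instance : Epi (toQuotient hr) := by
  have : Epi (toQuotient hr).f := by
    rw [epi_iff_surjective]
    exact Quotient.mk_surjective
  exact algebra_epi_of_epi _ (toQuotient hr)

lemma toQuotient_f_eq_iff {x y : b.A} : (toQuotient hr).f x = (toQuotient hr).f y ↔ r x y :=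
  _root_.Quotient.eq

noncomputable def quotientLift {V : T.Algebra} (k : b ⟶ V) (hk : ∀ x y, r x y → k.f x = k.f y) :
    quotient hr ⟶ V where
  f := ↾(_root_.Quotient.lift k.f hk)
  h := by
    have hout :
        (↾Quotient.out : (quotient hr).A ⟶ b.A) ≫ k.f = ↾(_root_.Quotient.lift k.f hk) := by
      ext q
      conv_rhs => rw [← Quotient.out_eq q]
      rfl
    conv_lhs => rw [← hout, Functor.map_comp, Category.assoc, k.h]
    rfl

end Quotient

lemma isCongruence_ker {b : T.Algebra} {ι : Type*} {V : ι → T.Algebra} (k : ∀ i, b ⟶ V i) :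
    b.IsCongruence (Setoid.ker fun x i => (k i).f x) := by
  intro X f g hfg t
  funext i
  have hi : f ≫ (k i).f = g ≫ (k i).f := by
    ext x
    exact congrFun (hfg x) i
  simp only [← types_comp_apply (T.map _) b.a, ← types_comp_apply _ (k i).f, Category.assoc,
    ← (k i).h, ← Functor.map_comp_assoc, hi]

lemma map_comp_η_comp_f {X Y : Type v} {Q : T.Algebra} (g : Y ⟶ X) (q : T.free.obj X ⟶ Q) :
    T.map (g ≫ T.η.app X ≫ q.f) ≫ Q.a = T.map g ≫ q.f := by
  have hq : T.map q.f ≫ Q.a = T.μ.app X ≫ q.f := q.h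
  erw [Functor.map_comp, Functor.map_comp, Category.assoc, Category.assoc, hq, T.right_unit_assoc]

section Colimit

variable {J : Type v} [Category.{w} J] (K : J ⥤ T.Algebra)

noncomputable def coconeSigmaDesc (c : Cocone K) : (Σ j, (K.obj j).A) ⟶ c.pt.A :=
  ↾fun p => ((c.ι.app p.1).f p.2 : c.pt.A)

noncomputable def coconeDescFree (c : Cocone K) : T.free.obj (Σ j, (K.obj j).A) ⟶ c.pt where
  f := T.map (coconeSigmaDesc K c) ≫ c.pt.a
  h := by
    change T.map (T.map _ ≫ c.pt.a) ≫ c.pt.a = T.μ.app _ ≫ T.map _ ≫ c.pt.a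
    rw [Functor.map_comp_assoc, ← c.pt.assoc, ← T.μ.naturality_assoc]
    rfl

lemma coconeDescFree_η (c : Cocone K) (j : J) (x : (K.obj j).A) :
    (coconeDescFree K c).f (T.η.app _ ⟨j, x⟩) = (c.ι.app j).f x := by
  have h := types_congr_hom (T.η.naturality (coconeSigmaDesc K c)) ⟨j, x⟩
  exact (congrArg c.pt.a h.symm).trans (a_η c.pt _)

lemma coconeDescFree_map_mk (c : Cocone K) (j : J) (t : T.obj (K.obj j).A) :
    (coconeDescFree K c).f (T.map (↾(Sigma.mk (β := fun j => (K.obj j).A) j)) t) =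
      (c.ι.app j).f ((K.obj j).a t) := by
  rw [(c.ι.app j).map_a]
  change c.pt.a ((T.map _ ≫ T.map _) t) = _
  rw [← Functor.map_comp]
  rfl

/-- Two terms of the free algebra on `Σ j, K j` are identified when every cocone sends them to
the same element. -/
noncomputable def colimitCocone : Cocone K where
  pt := quotient (isCongruence_ker (coconeDescFree K))
  ι :=
    { app j :=
        { f := ↾(Sigma.mk (β := fun j => (K.obj j).A) j) ≫ T.η.app _ ≫
            (toQuotient (isCongruence_ker (coconeDescFree K))).f
          h := by
            erw [map_comp_η_comp_f]
            ext t
            refine (toQuotient_f_eq_iff _).2 (funext fun c => ?_)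
            exact (coconeDescFree_map_mk K c j t).trans (coconeDescFree_η K c j _).symm }
      naturality j j' m := by
        ext x
        refine (toQuotient_f_eq_iff (isCongruence_ker (coconeDescFree K))).2 (funext fun c => ?_)
        change (coconeDescFree K c).f (T.η.app _ ⟨j', (K.map m).f x⟩) =
          (coconeDescFree K c).f (T.η.app _ ⟨j, x⟩)
        rw [coconeDescFree_η, coconeDescFree_η, ← c.w m]
        rfl }

noncomputable def isColimitColimitCocone : IsColimit (colimitCocone K) where
  desc c := quotientLift _ (coconeDescFree K c) fun _ _ h => congrFun h c
  fac c j := by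
    ext x
    exact coconeDescFree_η K c j x
  uniq c m hm := by
    refine (cancel_epi (toQuotient (isCongruence_ker (coconeDescFree K)))).1
      (free_hom_ext fun ⟨j, x⟩ => ?_)
    exact (types_congr_hom (congrArg Hom.f (hm j)) x).trans (coconeDescFree_η K c j x).symm

instance : HasColimitsOfSize.{w, v} T.Algebra :=
  ⟨fun _ _ => ⟨fun K => ⟨⟨⟨_, isColimitColimitCocone K⟩⟩⟩⟩⟩

end Colimit

end Algebra

end CategoryTheory.Monad

namespace EnochsPaper

attribute [local instance] Limits.hasSmallestColimitsOfHasColimits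

variable {A : Type u} [Category.{v} A] [HasColimits A] {M : A}

lemma desc_ι_comp_desc {X Y : Type v} {N : A} (g : X → Y) (h : Y → (M ⟶ N)) :
    (Sigma.desc fun x => Sigma.ι (fun _ => M) (g x)) ≫ Sigma.desc h = Sigma.desc (h ∘ g) := by
  ext
  simp

lemma TM_map_apply {X Y : Type v} (g : X ⟶ Y) (t : (TM M).obj X) :
    (TM M).map g t = t ≫ Sigma.desc fun x => Sigma.ι (fun _ => M) (g x) := rfl

lemma TM_η_apply {X : Type v} (x : X) : (TM M).η.app X x = Sigma.ι (fun _ => M) x := by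
  simp only [TM, Adjunction.toMonad, copowerAdj, Adjunction.mkOfHomEquiv_unit_app]
  exact Category.comp_id _

lemma TM_μ_apply {X : Type v} (t : (TM M).obj ((TM M).obj X)) :
    (TM M).μ.app X t = t ≫ Sigma.desc fun s => s := by
  simp [TM, copowerAdj, Adjunction.mkOfHomEquiv_counit_app]
  rfl

/-- `b.a`, with its argument typed as a morphism `M ⟶ M^{(b)}` rather than as an element of
`T_M(b)`: only then do rewrites under it typecheck. -/
def act (b : BCat M) (p : M ⟶ ∐ fun _ : b.A => M) : b.A := b.a p

lemma act_ι (b : BCat M) (x : b.A) : act b (Sigma.ι (fun _ => M) x) = x := by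
  rw [act, ← TM_η_apply]
  exact Monad.Algebra.a_η b x

lemma act_comp_desc_ι_act (b : BCat M) {X : Type v} (t : M ⟶ ∐ fun _ : X => M)
    (d : X → (M ⟶ ∐ fun _ : b.A => M)) :
    act b (t ≫ Sigma.desc fun x => Sigma.ι (fun _ => M) (act b (d x))) =
      act b (t ≫ Sigma.desc d) := by
  have h := Monad.Algebra.a_μ b ((TM M).map (↾d) t)
  erw [TM_μ_apply, TM_map_apply, TM_map_apply, Category.assoc, Category.assoc,
    desc_ι_comp_desc, desc_ι_comp_desc] at h
  exact h.symm

lemma hom_f_act {b c : BCat M} (h : b ⟶ c) (p : M ⟶ ∐ fun _ : b.A => M) :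
    h.f (act b p) = act c (p ≫ Sigma.desc fun x => Sigma.ι (fun _ => M) (h.f x)) :=
  Monad.Algebra.Hom.map_a h p

lemma act_comp_desc_mem_range {b c : BCat M} (e : b ⟶ c) {X : Type v}
    (t : M ⟶ ∐ fun _ : X => M) (d : X → (M ⟶ ∐ fun _ : c.A => M))
    (hd : ∀ x, act c (d x) ∈ Set.range e.f) : act c (t ≫ Sigma.desc d) ∈ Set.range e.f := by
  rw [← act_comp_desc_ι_act]
  exact Monad.Algebra.Hom.a_map_mem_range e t _ hd

section Preadditive

variable [Preadditive A]

lemma act_ι_act_sub_ι_act (b : BCat M) (p q : M ⟶ ∐ fun _ : b.A => M) :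
    act b (Sigma.ι (fun _ => M) (act b p) - Sigma.ι (fun _ => M) (act b q)) = act b (p - q) := by
  simpa using act_comp_desc_ι_act b (Sigma.ι (fun _ => M) p - Sigma.ι (fun _ => M) q) id

lemma act_ι_sub_ι_act_zero (b : BCat M) (x : b.A) :
    act b (Sigma.ι (fun _ => M) x - Sigma.ι (fun _ => M) (act b 0)) = x := by
  conv_lhs => rw [← act_ι b x, act_ι_act_sub_ι_act, sub_zero, act_ι]

lemma hom_f_act_zero {b c : BCat M} (h : b ⟶ c) : h.f (act b 0) = act c 0 := by
  rw [hom_f_act, zero_comp]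

lemma desc_zero {X : Type v} {N : A} : (Sigma.desc fun _ : X => (0 : M ⟶ N)) = 0 := by
  ext
  simp

noncomputable def zeroHom (b c : BCat M) : b ⟶ c where
  f := ↾fun _ => act c 0
  h := by
    refine ConcreteCategory.hom_ext _ _ fun (t : M ⟶ ∐ fun _ : b.A => M) => ?_
    change act c (t ≫ Sigma.desc fun _ => Sigma.ι (fun _ => M) (act c 0)) = act c 0
    rw [act_comp_desc_ι_act c t fun _ => 0, desc_zero, comp_zero]

section Cokernel

variable {b c : BCat M} (e : b ⟶ c)

def cokernelSetoid : Setoid c.A where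
  r x y := act c (Sigma.ι (fun _ => M) x - Sigma.ι (fun _ => M) y) ∈ Set.range e.f
  iseqv := by
    have key (t : M ⟶ ∐ fun _ : {p // act c p ∈ Set.range e.f} => M) :
        act c (t ≫ Sigma.desc Subtype.val) ∈ Set.range e.f :=
      act_comp_desc_mem_range e t _ fun p => p.2
    refine ⟨fun x => ?_, fun {x y} h => ?_, fun {x y z} h h' => ?_⟩
    · simpa using key 0
    · simpa using key (-Sigma.ι (fun _ => M) ⟨_, h⟩)
    · have := key (Sigma.ι (fun _ => M) ⟨_, h⟩ + Sigma.ι (fun _ => M) ⟨_, h'⟩)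
      rwa [Preadditive.add_comp, Sigma.ι_desc, Sigma.ι_desc, sub_add_sub_cancel] at this

lemma isCongruence_cokernelSetoid : c.IsCongruence (cokernelSetoid e) := by
  intro X f g hfg (t : M ⟶ ∐ fun _ : X => M)
  change act c (Sigma.ι (fun _ => M) (act c (t ≫ Sigma.desc fun x => Sigma.ι (fun _ => M) (f x))) -
    Sigma.ι (fun _ => M) (act c (t ≫ Sigma.desc fun x => Sigma.ι (fun _ => M) (g x)))) ∈ _
  have hsub : (Sigma.desc fun x => Sigma.ι (fun _ => M) (f x)) -
      (Sigma.desc fun x => Sigma.ι (fun _ => M) (g x)) =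
      Sigma.desc fun x => Sigma.ι (fun _ => M) (f x) - Sigma.ι (fun _ => M) (g x) := by
    ext
    simp
  rw [act_ι_act_sub_ι_act, ← Preadditive.comp_sub, hsub]
  exact act_comp_desc_mem_range e t _ hfg

lemma mem_range_iff_cokernelSetoid_act_zero (x : c.A) :
    x ∈ Set.range e.f ↔ cokernelSetoid e x (act c 0) := by
  change _ ↔ act c _ ∈ _
  rw [act_ι_sub_ι_act_zero]

lemma surjective_of_epi [Epi e] : Function.Surjective e.f := by
  have hr := isCongruence_cokernelSetoid e
  have hq : Monad.Algebra.toQuotient hr = zeroHom c _ := by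
    rw [← cancel_epi e]
    ext y
    change (Monad.Algebra.toQuotient hr).f (e.f y) = act _ 0
    rw [← hom_f_act_zero (Monad.Algebra.toQuotient hr), Monad.Algebra.toQuotient_f_eq_iff,
      ← mem_range_iff_cokernelSetoid_act_zero]
    exact ⟨y, rfl⟩
  intro x
  rw [← Set.mem_range, mem_range_iff_cokernelSetoid_act_zero,
    ← Monad.Algebra.toQuotient_f_eq_iff hr, hom_f_act_zero, hq]
  rfl

end Cokernel

instance : (TM M).forget.PreservesEpimorphisms where
  preserves e _ := (epi_iff_surjective _).2 (surjective_of_epi e)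

lemma projective_free (X : Type v) : Projective ((TM M).free.obj X) :=
  (TM M).adj.map_projective X inferInstance

end Preadditive

lemma addClass_self : AddClass M M :=
  ⟨PUnit, Sigma.ι (fun _ => M) PUnit.unit, Sigma.desc fun _ => 𝟙 M, by simp⟩

lemma PsiM_map_injective_of_copower {X : Type v} {N : A} :
    Function.Injective ((PsiM M).map : ((∐ fun _ : X => M) ⟶ N) → _) := fun _ _ h =>
  Sigma.hom_ext _ _ fun x => types_congr_hom (congrArg Monad.Algebra.Hom.f h)
    (Sigma.ι (fun _ => M) x : M ⟶ ∐ fun _ : X => M)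

lemma PsiM_map_surjective_of_copower {X : Type v} {N : A} :
    Function.Surjective ((PsiM M).map : ((∐ fun _ : X => M) ⟶ N) → _) := fun φ => by
  refine ⟨Sigma.desc fun x => φ.f (Sigma.ι (fun _ => M) x),
    Monad.free_hom_ext (T := TM M) fun x => ?_⟩
  rw [TM_η_apply]
  exact Sigma.ι_desc _ _

lemma PsiM_map_injective_of_addClass {N N' : A} (hN : AddClass M N) :
    Function.Injective ((PsiM M).map : (N ⟶ N') → _) := by
  obtain ⟨X, s, r, hsr⟩ := hN
  intro k₁ k₂ h
  have hr : r ≫ k₁ = r ≫ k₂ := PsiM_map_injective_of_copower (by simp only [Functor.map_comp, h])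
  rw [← Category.id_comp k₁, ← Category.id_comp k₂, ← hsr, Category.assoc, Category.assoc, hr]

lemma PsiM_map_surjective_of_addClass {N N' : A} (hN : AddClass M N) :
    Function.Surjective ((PsiM M).map : (N ⟶ N') → _) := by
  obtain ⟨X, s, r, hsr⟩ := hN
  intro φ
  obtain ⟨k, hk⟩ := PsiM_map_surjective_of_copower ((PsiM M).map r ≫ φ)
  refine ⟨s ≫ k, ?_⟩
  rw [Functor.map_comp, hk, ← Category.assoc, ← Functor.map_comp, hsr,
    CategoryTheory.Functor.map_id, Category.id_comp]

lemma projective_PsiM_obj_of_addClass [Preadditive A] {N : A} (hN : AddClass M N) :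
    Projective ((PsiM M).obj N) := by
  obtain ⟨X, s, r, hsr⟩ := hN
  have : Projective ((PsiM M).obj (∐ fun _ : X => M)) := projective_free X
  exact Retract.projective ⟨(PsiM M).map s, (PsiM M).map r,
    by rw [← Functor.map_comp, hsr, CategoryTheory.Functor.map_id]⟩

lemma exists_retract_PsiM_copower (b : BCat M) [Projective b] :
    ∃ (s : b ⟶ (PsiM M).obj (∐ fun _ : b.A => M)) (r : (PsiM M).obj (∐ fun _ : b.A => M) ⟶ b),
      s ≫ r = 𝟙 b := by
  have : Epi ((TM M).adj.counit.app b).f := by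
    rw [Monad.adj_counit]
    exact (IsSplitEpi.mk' ⟨(TM M).η.app b.A, b.unit⟩).epi
  have : Epi ((TM M).adj.counit.app b) := Monad.algebra_epi_of_epi _ _
  exact ⟨_, _, Projective.factorThru_comp (𝟙 b) ((TM M).adj.counit.app b)⟩

lemma addClass_of_isColimit_of_projective {J : Type w} [Category.{w'} J]
    {D : J ⥤ A} {c : Cocone D} (hc : IsColimit c) (hD : ∀ j, AddClass M (D.obj j))
    {c' : Cocone (D ⋙ PsiM M)} (hc' : IsColimit c') [Projective c'.pt] : AddClass M c.pt := by
  obtain ⟨s, r, hsr⟩ := exists_retract_PsiM_copower c'.pt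
  let u : c'.pt ⟶ (PsiM M).obj c.pt := hc'.desc ((PsiM M).mapCocone c)
  obtain ⟨ρ, hρ⟩ := PsiM_map_surjective_of_copower (r ≫ u)
  choose v hv using fun j => PsiM_map_surjective_of_addClass (hD j) (c'.ι.app j ≫ s)
  let vc : Cocone D :=
    { pt := ∐ fun _ : c'.pt.A => M
      ι :=
        { app := v
          naturality j j' m := by
            refine (PsiM_map_injective_of_addClass (hD j) ?_).trans (Category.comp_id _).symm
            rw [Functor.map_comp, hv, hv, ← Category.assoc]
            exact congrArg (· ≫ s) (c'.w m) } }
  refine ⟨c'.pt.A, hc.desc vc, ρ, hc.hom_ext fun j => (hc.fac_assoc vc j ρ).trans ?_⟩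
  rw [Category.comp_id]
  apply PsiM_map_injective_of_addClass (hD j)
  change (PsiM M).map (v j ≫ ρ) = _
  rw [Functor.map_comp, hv, hρ, Category.assoc, reassoc_of% hsr, hc'.fac]
  rfl

lemma exists_seqDiagram_iso {C : Type*} [Category C] (F : ℕ ⥤ C) {X : C}
    (e : ∀ n, F.obj n ≅ X) : ∃ g : ℕ → (X ⟶ X), Nonempty (seqDiagram X g ≅ F) := by
  let g n : X ⟶ X := (e n).inv ≫ F.map (homOfLE n.le_succ) ≫ (e (n + 1)).hom
  let τ : seqDiagram X g ⟶ F := NatTrans.ofSequence (fun n => (e n).inv) fun n => by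
    dsimp only [seqDiagram]
    erw [Functor.ofSequence_map_homOfLE_succ, Category.assoc, Category.assoc,
      Iso.hom_inv_id, Category.comp_id]
  exact ⟨g, ⟨NatIso.ofComponents (fun n => (e n).symm) fun f => τ.naturality f⟩⟩

namespace Stmt6

variable {A : Type u} [Category.{v} A] [HasColimits A] [Preadditive A]

/-- Let `A` be a cocomplete additive category, `M ∈ A`, and
`B = T_M-Mod` the related abelian category. If the class of projective objects of `B` is
closed under arbitrary (resp. countable) direct limits, then `Add(M)` is closed under
arbitrary (resp. countable) direct limits in `A`; and if every countable direct limit of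
copies of the projective generator `P = T_M(*)` is projective in `B`, then every countable
direct limit of copies of `M` in `A` belongs to `Add(M)`. -/
theorem projectives_closed_implies_AddM_closed (M : A) :
    (ClosedUnderDirectLimits (fun b : BCat M => Projective b) →
      ClosedUnderDirectLimits (AddClass M)) ∧
    (ClosedUnderCountableDirectLimits (fun b : BCat M => Projective b) →
      ClosedUnderCountableDirectLimits (AddClass M)) ∧
    ((∀ (g : ℕ → (PGen M ⟶ PGen M)) (c : Cocone (seqDiagram (PGen M) g)), IsColimit c →
        Projective c.pt) →
      ∀ (f : ℕ → (M ⟶ M)) (c : Cocone (seqDiagram M f)), IsColimit c →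
        AddClass M c.pt) := by
  refine ⟨fun hP Θ _ _ _ D c hc hD => ?_, fun hP Θ _ _ _ _ D c hc hD => ?_, fun hP f c hc => ?_⟩
  · have := hP Θ _ ‹_› ‹_› (D ⋙ PsiM M) _ (colimit.isColimit _) fun θ =>
      projective_PsiM_obj_of_addClass (hD θ)
    exact addClass_of_isColimit_of_projective hc hD (colimit.isColimit _)
  · have := hP Θ _ ‹_› ‹_› ‹_› (D ⋙ PsiM M) _ (colimit.isColimit _) fun θ =>
      projective_PsiM_obj_of_addClass (hD θ)
    exact addClass_of_isColimit_of_projective hc hD (colimit.isColimit _)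
  · obtain ⟨g, ⟨i⟩⟩ := exists_seqDiagram_iso (seqDiagram M f ⋙ PsiM M) fun _ =>
      (PsiM M).mapIso (coproductUniqueIso fun _ : PUnit => M).symm
    have : Projective (colimit.cocone (seqDiagram M f ⋙ PsiM M)).pt :=
      hP g _ ((IsColimit.precomposeHomEquiv i _).symm (colimit.isColimit _))
    exact addClass_of_isColimit_of_projective hc (fun _ => addClass_self) (colimit.isColimit _)

end Stmt6

end EnochsPaper
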